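/- arXiv:cs/0502043 — 2 statements merged into one kernel-verified Lean document; each statement's English description precedes it below -/
import Mathlib

section
/- Let S = {p_1, ..., p_n} be points sorted by strictly increasing y-coordinate. Then there exists a point p_L with x-coordinate sufficiently negative such that no segment p_L p_i crosses any segment p_j p_{j+1} (for consecutive indices) and no two segments p_L p_i and p_L p_j cross except at p_L. -/
/-!
Put `p_L = (X, 0)` with `X` very negative. For `i < k` the cross product
`(p_i - p_L) × (p_k - p_L) = (x_i y_k - y_i x_k) + X (y_i - y_k)` is then positive since
`y_i < y_k`: seen from `p_L`, the points are sorted counterclockwise. Hence no two segments from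
`p_L` are collinear, and `p_j`, `p_{j+1}` lie strictly on the same side of the line through `p_L`
and `p_i` unless one of them is `p_i`.
-/

open Filter

local notation "ℝ²" => EuclideanSpace ℝ (Fin 2)

namespace LeftFan

noncomputable def cross (u v : ℝ²) : ℝ := u 0 * v 1 - u 1 * v 0

theorem cross_self (u : ℝ²) : cross u u = 0 := by
  simp only [cross]; ring

theorem cross_swap (u v : ℝ²) : cross v u = -cross u v := by
  simp only [cross]; ring

theorem cross_zero_right (u : ℝ²) : cross u 0 = 0 := by
  simp [cross]

theorem cross_sub_add_smul (w o a b : ℝ²) {c d : ℝ} (hcd : c + d = 1) :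
    cross w (c • a + d • b - o) = c * cross w (a - o) + d * cross w (b - o) := by
  simp only [cross, PiLp.sub_apply, PiLp.add_apply, PiLp.smul_apply, smul_eq_mul]
  linear_combination (w 0 * o 1 - w 1 * o 0) * hcd

theorem cross_sub_eq_zero_of_mem_segment {o q z : ℝ²} (hz : z ∈ segment ℝ o q) :
    cross (q - o) (z - o) = 0 := by
  obtain ⟨c, d, -, -, hcd, rfl⟩ := hz
  rw [cross_sub_add_smul _ _ _ _ hcd, sub_self, cross_self, cross_zero_right]
  ring

theorem segment_inter_segment_eq_singleton {o a b : ℝ²} (h : cross (a - o) (b - o) ≠ 0) :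
    segment ℝ o a ∩ segment ℝ o b = {o} := by
  refine Set.Subset.antisymm ?_ (by simp [left_mem_segment])
  rintro z ⟨hza, c, d, -, -, hcd, rfl⟩
  have hd := cross_sub_eq_zero_of_mem_segment hza
  rw [cross_sub_add_smul _ _ _ _ hcd, sub_self, cross_zero_right, mul_zero, zero_add] at hd
  obtain rfl : d = 0 := (mul_eq_zero.mp hd).resolve_right h
  simp [show c = 1 by linarith]

theorem disjoint_segment_of_cross_mul_pos {o q a b : ℝ²}
    (h : 0 < cross (q - o) (a - o) * cross (q - o) (b - o)) :
    Disjoint (segment ℝ o q) (segment ℝ a b) := by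
  rw [Set.disjoint_left]
  rintro z hzq ⟨c, d, hc, hd, hcd, rfl⟩
  have h0 := cross_sub_eq_zero_of_mem_segment hzq
  rw [cross_sub_add_smul _ _ _ _ hcd] at h0
  rcases pos_and_pos_or_neg_and_neg_of_mul_pos h with ⟨ha, hb⟩ | ⟨ha, hb⟩
  · nlinarith [mul_nonneg hc ha.le, mul_nonneg hd hb.le]
  · nlinarith [mul_nonpos_of_nonneg_of_nonpos hc ha.le, mul_nonpos_of_nonneg_of_nonpos hd hb.le]

theorem segment_inter_segment_subset_left {o q b : ℝ²} (h : cross (q - o) (b - o) ≠ 0) :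
    segment ℝ o q ∩ segment ℝ q b ⊆ {q} := by
  rintro z ⟨hzq, c, d, -, -, hcd, rfl⟩
  have h0 := cross_sub_eq_zero_of_mem_segment hzq
  rw [cross_sub_add_smul _ _ _ _ hcd, cross_self, mul_zero, zero_add] at h0
  obtain rfl : d = 0 := (mul_eq_zero.mp h0).resolve_right h
  simp [show c = 1 by linarith]

theorem segment_inter_segment_subset_right {o q a : ℝ²} (h : cross (q - o) (a - o) ≠ 0) :
    segment ℝ o q ∩ segment ℝ a q ⊆ {q} := by
  rw [segment_symm ℝ a q]
  exact segment_inter_segment_subset_left h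

def AngularlySorted {ι : Type*} [LT ι] (o : ℝ²) (p : ι → ℝ²) : Prop :=
  ∀ i k, i < k → 0 < cross (p i - o) (p k - o)

section AngularlySorted

variable {o : ℝ²}

theorem AngularlySorted.cross_neg {ι : Type*} [LT ι] {p : ι → ℝ²} (hp : AngularlySorted o p)
    {i k : ι} (hki : k < i) : cross (p i - o) (p k - o) < 0 := by
  rw [cross_swap]; linarith [hp k i hki]

theorem AngularlySorted.segment_inter_segment {ι : Type*} [LinearOrder ι] {p : ι → ℝ²}
    (hp : AngularlySorted o p) {i j : ι} (hij : i ≠ j) :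
    segment ℝ o (p i) ∩ segment ℝ o (p j) = {o} := by
  refine segment_inter_segment_eq_singleton ?_
  rcases hij.lt_or_gt with h | h
  · exact (hp i j h).ne'
  · exact (hp.cross_neg h).ne

theorem AngularlySorted.segment_inter_segment_succ {n : ℕ} {p : Fin n → ℝ²}
    (hp : AngularlySorted o p) (i j : Fin n) (hj : (j : ℕ) + 1 < n) :
    segment ℝ o (p i) ∩ segment ℝ (p j) (p ⟨(j : ℕ) + 1, hj⟩) ⊆
      {p i} ∩ ({p j} ∪ {p ⟨(j : ℕ) + 1, hj⟩}) := by
  set j' : Fin n := ⟨(j : ℕ) + 1, hj⟩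
  have hjj' : j < j' := Fin.lt_def.mpr (Nat.lt_succ_self _)
  rcases lt_trichotomy i j with hij | rfl | hji
  · rw [(disjoint_segment_of_cross_mul_pos
      (mul_pos (hp i j hij) (hp i j' (hij.trans hjj')))).inter_eq]
    exact Set.empty_subset _
  · intro z hz
    obtain rfl := segment_inter_segment_subset_left (hp i j' hjj').ne' hz
    simp
  · rcases Nat.lt_or_eq_of_le (Fin.lt_def.mp hji) with hj'i | hi
    · rw [(disjoint_segment_of_cross_mul_pos
        (mul_pos_of_neg_of_neg (hp.cross_neg hji) (hp.cross_neg (Fin.lt_def.mpr hj'i)))).inter_eq]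
      exact Set.empty_subset _
    · obtain rfl : j' = i := Fin.ext hi
      intro z hz
      obtain rfl := segment_inter_segment_subset_right (hp.cross_neg hjj').ne hz
      simp

end AngularlySorted

theorem eventually_atBot_cross_pos {a b : ℝ²} (h : a 1 < b 1) :
    ∀ᶠ X in atBot, 0 < cross (a - !₂[X, 0]) (b - !₂[X, 0]) := by
  filter_upwards [eventually_lt_atBot ((a 0 * b 1 - a 1 * b 0) / (b 1 - a 1))] with X hX
  rw [lt_div_iff₀ (by linarith)] at hX
  simp only [cross, PiLp.sub_apply, Matrix.cons_val_zero, Matrix.cons_val_one,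
    Matrix.cons_val_fin_one, sub_zero, sub_pos]
  linear_combination hX

end LeftFan

open LeftFan in
/-- The key geometric step of Theorem 2.4: given points `p 0, …, p (n-1)` sorted by
strictly increasing `y`-coordinate, there is a point `p_L` (placed sufficiently far
to the left) such that the segments from `p_L` to each point, together with the
segments between vertically consecutive points, pairwise meet only at shared
endpoints. -/
theorem exists_left_fan_point (n : ℕ) (p : Fin n → EuclideanSpace ℝ (Fin 2))
    (hy : ∀ i j : Fin n, i < j → p i 1 < p j 1) :
    ∃ pL : EuclideanSpace ℝ (Fin 2),
      (∀ i : Fin n, pL ≠ p i) ∧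
      (∀ (i j : Fin n) (hj : (j : ℕ) + 1 < n),
        segment ℝ pL (p i) ∩ segment ℝ (p j) (p ⟨(j : ℕ) + 1, hj⟩) ⊆
          {p i} ∩ ({p j} ∪ {p ⟨(j : ℕ) + 1, hj⟩})) ∧
      (∀ i j : Fin n, i ≠ j → segment ℝ pL (p i) ∩ segment ℝ pL (p j) = {pL}) := by
  have hfar : ∀ᶠ X in atBot, (∀ i, X < p i 0) ∧ AngularlySorted !₂[X, 0] p := by
    refine (eventually_all.2 fun i => eventually_lt_atBot _).and ?_
    exact eventually_all.2 fun i => eventually_all.2 fun k =>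
      eventually_imp_distrib_left.2 fun hik => eventually_atBot_cross_pos (hy i k hik)
  obtain ⟨X, hXp, hp⟩ := hfar.exists
  refine ⟨!₂[X, 0], fun i h => (hXp i).ne ?_, hp.segment_inter_segment_succ,
    fun i j hij => hp.segment_inter_segment hij⟩
  simpa using congrArg (· 0) h
end

section
/- For any point p in the interior of a triangle T = Δ(a,b,c), the six triangles obtained by extending the three lines through p and each vertex of T (the subdivision of T at p) have pairwise disjoint interiors and cover T. -/
/-!
Use barycentric coordinates `x = (x₀, x₁, x₂)` with respect to `a, b, c` and the ratios
`rᵢ(x) = xᵢ / pᵢ`. The line through `p` and a vertex is the locus where the two other ratios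
agree, and each of the six triangles is the part of `T` on which the three ratios come in one
fixed order. Sorting the ratios of a point of `T` places it in a triangle; a point of two
triangles has two equal ratios, so two triangles meet inside a line, which has empty interior.
-/

noncomputable section

abbrev Pt : Type := EuclideanSpace ℝ (Fin 2)

open Set

theorem Fin.monotone_three_iff {α : Type*} [Preorder α] {f : Fin 3 → α} :
    Monotone f ↔ f 0 ≤ f 1 ∧ f 1 ≤ f 2 := by
  simp [Fin.monotone_iff_le_succ, Fin.forall_fin_two]

theorem AffineMap.apply_sum_smul_of_sum_eq_one {ι E F : Type*} [AddCommGroup E] [Module ℝ E]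
    [AddCommGroup F] [Module ℝ F] (f : E →ᵃ[ℝ] F) (s : Finset ι) {w : ι → ℝ}
    (hw : ∑ i ∈ s, w i = 1) (z : ι → E) :
    f (∑ i ∈ s, w i • z i) = ∑ i ∈ s, w i • f (z i) := by
  rw [← s.affineCombination_eq_linear_combination z w hw, s.map_affineCombination z w hw,
    s.affineCombination_eq_linear_combination _ w hw]
  rfl

theorem AffineMap.interior_preimage_singleton_eq_empty {E : Type*} [AddCommGroup E]
    [Module ℝ E] [TopologicalSpace E] [IsTopologicalAddGroup E] [ContinuousSMul ℝ E]
    (f : E →ᵃ[ℝ] ℝ) {x y : E} (hxy : f x ≠ f y) (c : ℝ) :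
    interior (f ⁻¹' {c}) = ∅ := by
  have hf : IsOpenMap f := by
    refine AffineMap.isOpenMap_linear_iff.1 (f.linear.isOpenMap_of_finiteDimensional ?_)
    refine LinearMap.surjective_of_ne_zero fun h => hxy ?_
    rw [← sub_eq_zero, ← vsub_eq_sub, ← f.linearMap_vsub, h, LinearMap.zero_apply]
  have hsub : f '' interior (f ⁻¹' {c}) ⊆ interior {c} :=
    (hf _ isOpen_interior).subset_interior_iff.2
      ((image_mono interior_subset).trans (image_preimage_subset _ _))
  rwa [interior_singleton, subset_empty_iff, image_eq_empty] at hsub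

theorem affineIndependent_of_nonempty_interior_convexHull {V : Type*} [NormedAddCommGroup V]
    [NormedSpace ℝ V] [FiniteDimensional ℝ V] {n : ℕ} (hn : Module.finrank ℝ V = n)
    {v : Fin (n + 1) → V} (h : (interior (convexHull ℝ (range v))).Nonempty) :
    AffineIndependent ℝ v := by
  rw [affineIndependent_iff_finrank_vectorSpan_eq ℝ v (Fintype.card_fin _),
    ← direction_affineSpan, affineSpan_eq_top_of_nonempty_interior h,
    AffineSubspace.direction_top, finrank_top, hn]

theorem AffineBasis.coord_eq_mul_of_collinear {ι k V P : Type*} [Field k] [AddCommGroup V]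
    [Module k V] [AddTorsor V P] (B : AffineBasis ι k P) {i j : ι} (hij : i ≠ j) {p q : P}
    (hq : B.coord j q = 0) (hcol : Collinear k {B j, p, q}) :
    B.coord i p = (1 - B.coord j p) * B.coord i q := by
  have hne : B j ≠ q := fun h => by simp [← h] at hq
  obtain ⟨s, rfl⟩ : ∃ s, AffineMap.lineMap (B j) q s = p :=
    mem_affineSpan_pair_iff_exists_lineMap_eq.1 <|
      hcol.mem_affineSpan_of_mem_of_ne (by simp) (by simp) (by simp) hne
  simp [AffineMap.apply_lineMap, AffineMap.lineMap_apply_ring, B.coord_apply_ne hij, hq]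

section CevianCell

variable {E : Type*} [AddCommGroup E] [Module ℝ E] {n : ℕ}

def cevianCell (B : AffineBasis (Fin n) ℝ E) (p : E) (σ : Equiv.Perm (Fin n)) : Set E :=
  {x | (∀ i, 0 ≤ B.coord i x) ∧ Monotone ((fun i => B.coord i x / B.coord i p) ∘ σ)}

variable (B : AffineBasis (Fin n) ℝ E) (p : E)

theorem cevianCell_reindex (σ : Equiv.Perm (Fin n)) :
    cevianCell (B.reindex σ.symm) p 1 = cevianCell B p σ := by
  ext x
  simp only [cevianCell, mem_ofPred_eq, AffineBasis.coord_reindex, Equiv.symm_symm,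
    Equiv.Perm.coe_one, Function.comp_id]
  rw [σ.forall_congr_right (q := fun i => 0 ≤ B.coord i x)]
  rfl

theorem convex_cevianCell (σ : Equiv.Perm (Fin n)) : Convex ℝ (cevianCell B p σ) := by
  rintro x ⟨hx, hxm⟩ y ⟨hy, hym⟩ a b ha hb hab
  simp only [cevianCell, mem_ofPred_eq, Convex.combo_affine_apply hab, smul_eq_mul]
  refine ⟨fun i => by have := hx i; have := hy i; positivity, fun i j hij => ?_⟩
  have hxij := hxm hij
  have hyij := hym hij
  simp only [Function.comp_apply, add_div, mul_div_assoc] at hxij hyij ⊢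
  gcongr

theorem iUnion_cevianCell : ⋃ σ, cevianCell B p σ = convexHull ℝ (range B) := by
  rw [B.convexHull_eq_nonneg_coord]
  ext x
  simp only [mem_iUnion, cevianCell, mem_ofPred_eq]
  exact ⟨fun ⟨_, hx, _⟩ => hx, fun hx => ⟨Tuple.sort _, hx, Tuple.monotone_sort _⟩⟩

variable {p}

theorem disjoint_interior_cevianCell [TopologicalSpace E] [IsTopologicalAddGroup E]
    [ContinuousSMul ℝ E] (hp : ∀ i, 0 < B.coord i p) {σ τ : Equiv.Perm (Fin n)}
    (hστ : σ ≠ τ) :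
    Disjoint (interior (cevianCell B p σ)) (interior (cevianCell B p τ)) := by
  obtain ⟨l, hl⟩ : ∃ l, σ l ≠ τ l := not_forall.1 fun h => hστ (Equiv.ext h)
  set f : E →ᵃ[ℝ] ℝ :=
    (B.coord (σ l) p)⁻¹ • B.coord (σ l) - (B.coord (τ l) p)⁻¹ • B.coord (τ l)
  have hf : f (B (σ l)) ≠ f (B (τ l)) := by
    have : 0 < (B.coord (σ l) p)⁻¹ + (B.coord (τ l) p)⁻¹ := by
      have := hp (σ l)
      have := hp (τ l)
      positivity
    simp only [f, AffineMap.coe_sub, AffineMap.coe_smul, Pi.sub_apply, Pi.smul_apply,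
      smul_eq_mul, B.coord_apply_eq, B.coord_apply_ne hl, B.coord_apply_ne hl.symm]
    intro h
    linarith
  have hsub : cevianCell B p σ ∩ cevianCell B p τ ⊆ f ⁻¹' {0} := by
    rintro x ⟨⟨-, hσ⟩, -, hτ⟩
    have := congrFun (Tuple.unique_monotone hσ hτ) l
    simp only [Function.comp_apply] at this
    simp only [f, AffineMap.coe_sub, AffineMap.coe_smul, Pi.sub_apply, Pi.smul_apply,
      smul_eq_mul, mem_preimage, mem_singleton_iff, inv_mul_eq_div, this, sub_self]
  rw [Set.disjoint_iff_inter_eq_empty, ← interior_inter]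
  exact subset_eq_empty (interior_mono hsub) (f.interior_preimage_singleton_eq_empty hf 0)

end CevianCell

section Triangle

variable {E : Type*} [AddCommGroup E] [Module ℝ E] (B : AffineBasis (Fin 3) ℝ E) {p q : E}

theorem convexHull_subset_cevianCell_one (hp : ∀ i, 0 < B.coord i p)
    (hq : ∀ i, 0 ≤ B.coord i q) (hq0 : B.coord 0 q = 0)
    (hp1 : B.coord 1 p = (1 - B.coord 0 p) * B.coord 1 q)
    (hp2 : B.coord 2 p = (1 - B.coord 0 p) * B.coord 2 q) :
    convexHull ℝ {p, B 2, q} ⊆ cevianCell B p 1 := by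
  refine convexHull_min ?_ (convex_cevianCell B p 1)
  simp only [insert_subset_iff, singleton_subset_iff, cevianCell, mem_ofPred_eq,
    Equiv.Perm.coe_one, Function.comp_id, Fin.monotone_three_iff]
  refine ⟨⟨fun i => (hp i).le, ?_⟩, ⟨fun i => ?_, ?_⟩, hq, ?_⟩
  · simp [div_self (hp _).ne']
  · rw [AffineBasis.coord_apply]
    split_ifs <;> norm_num
  · simp only [B.coord_apply_eq, B.coord_apply_ne, ne_eq, Fin.reduceEq, not_false_eq_true,
      zero_div]
    exact ⟨le_rfl, div_nonneg zero_le_one (hp 2).le⟩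
  · rw [hq0, zero_div]
    refine ⟨div_nonneg (hq 1) (hp 1).le, ?_⟩
    rw [div_le_div_iff₀ (hp 1) (hp 2), hp1, hp2]
    exact le_of_eq (by ring)

theorem cevianCell_one_subset_convexHull (hp : ∀ i, 0 < B.coord i p) (hq0 : B.coord 0 q = 0)
    (hp1 : B.coord 1 p = (1 - B.coord 0 p) * B.coord 1 q)
    (hp2 : B.coord 2 p = (1 - B.coord 0 p) * B.coord 2 q) :
    cevianCell B p 1 ⊆ convexHull ℝ {p, B 2, q} := by
  rintro x ⟨hx, hmono⟩
  obtain ⟨r, hr⟩ : ∃ r : Fin 3 → ℝ, ∀ i, B.coord i x = B.coord i p * r i :=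
    ⟨_, fun i => (mul_div_cancel₀ _ (hp i).ne').symm⟩
  simp only [Equiv.Perm.coe_one, Function.comp_id, Fin.monotone_three_iff, hr,
    mul_div_cancel_left₀ _ (hp _).ne'] at hmono
  have hpsum : B.coord 0 p + B.coord 1 p + B.coord 2 p = 1 := by
    rw [← B.sum_coord_apply_eq_one p, Fin.sum_univ_three]
  have hxsum : B.coord 0 p * r 0 + B.coord 1 p * r 1 + B.coord 2 p * r 2 = 1 := by
    rw [← hr, ← hr, ← hr, ← B.sum_coord_apply_eq_one x, Fin.sum_univ_three]
  set w : Fin 3 → ℝ := ![r 0, B.coord 2 p * (r 2 - r 1), (1 - B.coord 0 p) * (r 1 - r 0)]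
  have hw : ∑ i, w i = 1 := by
    simp only [w, Fin.sum_univ_three, Matrix.cons_val_zero, Matrix.cons_val_one, Matrix.cons_val]
    linear_combination hxsum - r 1 * hpsum
  have hxw : x = ∑ i, w i • ![p, B 2, q] i := B.ext_elem fun i => by
    rw [AffineMap.apply_sum_smul_of_sum_eq_one _ _ hw, Fin.sum_univ_three, hr]
    fin_cases i <;>
      simp only [w, hq0, Fin.zero_eta, Fin.mk_one, Fin.reduceFinMk, Matrix.cons_val_zero,
        Matrix.cons_val_one, Matrix.cons_val, smul_eq_mul, B.coord_apply_eq, B.coord_apply_ne,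
        ne_eq, Fin.reduceEq, not_false_eq_true, mul_zero, mul_one, add_zero]
    · ring
    · linear_combination (r 1 - r 0) * hp1
    · linear_combination (r 1 - r 0) * hp2
  rw [hxw]
  refine (convex_convexHull ℝ _).sum_mem (fun i _ => ?_) hw
    (fun i _ => subset_convexHull ℝ _ (by fin_cases i <;> simp))
  fin_cases i <;> simp only [w]
  · exact (mul_nonneg_iff_of_pos_left (hp 0)).1 (hr 0 ▸ hx 0)
  · exact mul_nonneg (hp 2).le (sub_nonneg.2 hmono.2)
  · exact mul_nonneg (by linarith [hp 1, hp 2]) (sub_nonneg.2 hmono.1)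

theorem convexHull_eq_cevianCell_one (hp : ∀ i, 0 < B.coord i p)
    (hq : q ∈ segment ℝ (B 2) (B 1)) (hcol : Collinear ℝ {B 0, p, q}) :
    convexHull ℝ {p, B 2, q} = cevianCell B p 1 := by
  obtain ⟨a, b, ha, hb, hab, hq⟩ := hq
  have hqB : ∀ i, B.coord i q = a * B.coord i (B 2) + b * B.coord i (B 1) := fun i => by
    rw [← hq, Convex.combo_affine_apply hab, smul_eq_mul, smul_eq_mul]
  have hq0 : B.coord 0 q = 0 := by simp [hqB]
  have hp1 := B.coord_eq_mul_of_collinear (by decide : (1 : Fin 3) ≠ 0) hq0 hcol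
  have hp2 := B.coord_eq_mul_of_collinear (by decide : (2 : Fin 3) ≠ 0) hq0 hcol
  refine (convexHull_subset_cevianCell_one B hp (fun i => ?_) hq0 hp1 hp2).antisymm
    (cevianCell_one_subset_convexHull B hp hq0 hp1 hp2)
  fin_cases i <;> simp [hqB, ha, hb]

theorem convexHull_eq_cevianCell (hp : ∀ i, 0 < B.coord i p) (σ : Equiv.Perm (Fin 3))
    (hq : q ∈ segment ℝ (B (σ 2)) (B (σ 1))) (hcol : Collinear ℝ {B (σ 0), p, q}) :
    convexHull ℝ {p, B (σ 2), q} = cevianCell B p σ := by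
  have := convexHull_eq_cevianCell_one (B.reindex σ.symm) (fun i => by simpa using hp (σ i))
    (by simpa using hq) (by simpa using hcol)
  simpa [cevianCell_reindex] using this

theorem convexHull_eq_cevianCell' (hp : ∀ i, 0 < B.coord i p) (σ : Equiv.Perm (Fin 3))
    (hq : q ∈ segment ℝ (B (σ 1)) (B (σ 2))) (hcol : Collinear ℝ {B (σ 0), p, q}) :
    convexHull ℝ {p, q, B (σ 2)} = cevianCell B p σ := by
  rw [pair_comm]
  exact convexHull_eq_cevianCell B hp σ (segment_symm ℝ (B (σ 1)) (B (σ 2)) ▸ hq) hcol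

end Triangle

theorem subdivision_six_triangles_general (a b c p a' b' c' : Pt)
    (hp : p ∈ interior (convexHull ℝ ({a, b, c} : Set Pt)))
    (ha' : a' ∈ segment ℝ b c) (hca : Collinear ℝ ({a, p, a'} : Set Pt))
    (hb' : b' ∈ segment ℝ c a) (hcb : Collinear ℝ ({b, p, b'} : Set Pt))
    (hc' : c' ∈ segment ℝ a b) (hcc : Collinear ℝ ({c, p, c'} : Set Pt)) :
    ∃ t : Fin 6 → Set Pt,
      t 0 = convexHull ℝ ({p, a, c'} : Set Pt) ∧
      t 1 = convexHull ℝ ({p, c', b} : Set Pt) ∧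
      t 2 = convexHull ℝ ({p, b, a'} : Set Pt) ∧
      t 3 = convexHull ℝ ({p, a', c} : Set Pt) ∧
      t 4 = convexHull ℝ ({p, c, b'} : Set Pt) ∧
      t 5 = convexHull ℝ ({p, b', a} : Set Pt) ∧
      (∀ i j : Fin 6, i ≠ j → interior (t i) ∩ interior (t j) = ∅) ∧
      (⋃ i, t i) = convexHull ℝ ({a, b, c} : Set Pt) := by
  have hrange : range ![a, b, c] = {a, b, c} := by
    rw [Matrix.range_cons, Matrix.range_cons_cons_empty, singleton_union]
  rw [← hrange] at hp ⊢
  let B : AffineBasis (Fin 3) ℝ Pt :=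
    ⟨![a, b, c],
      affineIndependent_of_nonempty_interior_convexHull finrank_euclideanSpace_fin ⟨p, hp⟩,
      affineSpan_eq_top_of_nonempty_interior ⟨p, hp⟩⟩
  have hpos : ∀ i, 0 < B.coord i p := by
    have hpB : p ∈ interior (convexHull ℝ (range B)) := hp
    rwa [B.interior_convexHull] at hpB
  -- On the `i`-th triangle the ratios increase along `σ i`.
  let σ : Fin 6 → Equiv.Perm (Fin 3) :=
    ![Equiv.swap 0 2, (finRotate 3).symm, Equiv.swap 1 2, 1, Equiv.swap 0 1, finRotate 3]
  have hσ : Function.Bijective σ := by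
    rw [Fintype.bijective_iff_injective_and_card]
    exact ⟨by decide, by simp [Fintype.card_perm, Nat.factorial]⟩
  refine ⟨fun i => cevianCell B p (σ i),
    (convexHull_eq_cevianCell B hpos (Equiv.swap 0 2) hc' hcc).symm,
    (convexHull_eq_cevianCell' B hpos (finRotate 3).symm hc' hcc).symm,
    (convexHull_eq_cevianCell B hpos (Equiv.swap 1 2) ha' hca).symm,
    (convexHull_eq_cevianCell' B hpos 1 ha' hca).symm,
    (convexHull_eq_cevianCell B hpos (Equiv.swap 0 1) hb' hcb).symm,
    (convexHull_eq_cevianCell' B hpos (finRotate 3) hb' hcb).symm,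
    fun i j hij =>
      disjoint_iff_inter_eq_empty.1 (disjoint_interior_cevianCell B hpos (hσ.1.ne hij)),
    ?_⟩
  rw [hσ.2.iUnion_comp (cevianCell B p), iUnion_cevianCell]
  rfl

/-- Subdivision (Definition 3.2): for `p` interior to the triangle `T = Δ(a,b,c)`,
the three lines through `p` and each vertex of `T` meet the opposite sides at
points `a' ∈ bc`, `b' ∈ ca`, `c' ∈ ab`, and the six resulting triangles have
pairwise disjoint interiors and cover `T`. -/
theorem subdivision_six_triangles (a b c p a' b' c' : Pt)
    (hind : AffineIndependent ℝ ![a, b, c])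
    (hp : p ∈ interior (convexHull ℝ ({a, b, c} : Set Pt)))
    (ha' : a' ∈ segment ℝ b c) (hca : Collinear ℝ ({a, p, a'} : Set Pt))
    (hb' : b' ∈ segment ℝ c a) (hcb : Collinear ℝ ({b, p, b'} : Set Pt))
    (hc' : c' ∈ segment ℝ a b) (hcc : Collinear ℝ ({c, p, c'} : Set Pt)) :
    ∃ t : Fin 6 → Set Pt,
      t 0 = convexHull ℝ ({p, a, c'} : Set Pt) ∧
      t 1 = convexHull ℝ ({p, c', b} : Set Pt) ∧
      t 2 = convexHull ℝ ({p, b, a'} : Set Pt) ∧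
      t 3 = convexHull ℝ ({p, a', c} : Set Pt) ∧
      t 4 = convexHull ℝ ({p, c, b'} : Set Pt) ∧
      t 5 = convexHull ℝ ({p, b', a} : Set Pt) ∧
      (∀ i j : Fin 6, i ≠ j → interior (t i) ∩ interior (t j) = ∅) ∧
      (⋃ i, t i) = convexHull ℝ ({a, b, c} : Set Pt) :=
  subdivision_six_triangles_general a b c p a' b' c' hp ha' hca hb' hcb hc' hcc
end
end
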